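/- Let P be a finite subset of Fin n → ZMod 2 and k a natural number. For a subset Z ⊆ P let NF(Z) denote the extended-lex-minimal Boolean polynomial taking value 0 on Z and value 1 on P \ Z. Then the number of k-tuples (Z₁, …, Z_k) of subsets of P such that every standard monomial of the vanishing ideal I(P) (with respect to the lexicographic monomial order) lies in the support of NF(Z_j) for at least one j equals (2^k − 1)^(|P|). -/
import Mathlib

open MvPolynomial

/-- A Boolean (multilinear) polynomial: every variable occurs with exponent ≤ 1
in every monomial of the support. -/
def IsBooleanPoly {n : ℕ} (f : MvPolynomial (Fin n) (ZMod 2)) : Prop :=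
  ∀ m ∈ f.support, ∀ i, m i ≤ 1

/-- The field ideal ⟨x_i² + x_i : i⟩. -/
noncomputable def fieldIdeal (n : ℕ) : Ideal (MvPolynomial (Fin n) (ZMod 2)) :=
  Ideal.span (Set.range fun i : Fin n => X i ^ 2 + X i)

/-- The vanishing ideal of a set of points. -/
noncomputable def pointsVanishingIdeal {n : ℕ} (P : Set (Fin n → ZMod 2)) :
    Ideal (MvPolynomial (Fin n) (ZMod 2)) where
  carrier := {f | ∀ p ∈ P, eval p f = 0}
  add_mem' := by
    intro a b ha hb p hp
    simp [ha p hp, hb p hp]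
  zero_mem' := by
    intro p hp
    simp
  smul_mem' := by
    intro c a ha p hp
    simp [smul_eq_mul, ha p hp]

/-- Strict extended lex order on Boolean polynomials: `p < q` iff the lex-largest
exponent vector in the symmetric difference of the supports belongs to the support of `q`. -/
def ExtLexLt {n : ℕ} (p q : MvPolynomial (Fin n) (ZMod 2)) : Prop :=
  ∃ m ∈ q.support \ p.support, ∀ m' ∈ (symmDiff p.support q.support), toLex m' ≤ toLex m

def ExtLexLe {n : ℕ} (p q : MvPolynomial (Fin n) (ZMod 2)) : Prop :=
  p = q ∨ ExtLexLt p q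

/-- `t` is the leading monomial of `f` with respect to the monomial order `m`. -/
def IsLeadingMonomial {n : ℕ} (m : MonomialOrder (Fin n))
    (f : MvPolynomial (Fin n) (ZMod 2)) (t : Fin n →₀ ℕ) : Prop :=
  t ∈ f.support ∧ ∀ t' ∈ f.support, m.toSyn t' ≤ m.toSyn t

/-- `t` is a standard monomial of the ideal `I` w.r.t. the monomial order `m`:
it is not the leading monomial of any (necessarily nonzero) element of `I`. -/
def IsStdMonomial {n : ℕ} (m : MonomialOrder (Fin n))
    (I : Ideal (MvPolynomial (Fin n) (ZMod 2))) (t : Fin n →₀ ℕ) : Prop :=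
  ¬ ∃ f ∈ I, IsLeadingMonomial m f t

/-! ### Auxiliary lemmas -/

lemma zmod2_mul_self : ∀ a : ZMod 2, a * a = a := by decide

lemma zmod2_add_self (a : ZMod 2) : a + a = 0 := by revert a; decide

lemma zmod2_pow (a : ZMod 2) {s : ℕ} (hs : s ≠ 0) : a ^ s = a := by
  induction s with
  | zero => exact absurd rfl hs
  | succ s ih =>
    rcases Nat.eq_zero_or_pos s with h | h
    · subst h; simp
    · rw [pow_succ, ih h.ne', zmod2_mul_self]

lemma zmod2_eq_of_ne_iff {a b : ZMod 2} (h : a ≠ 0 ↔ b ≠ 0) : a = b := by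
  revert h; revert a b; decide

/-- Over `ZMod 2`, a polynomial is determined by its support. -/
lemma eq_of_support_eq {n : ℕ} {p q : MvPolynomial (Fin n) (ZMod 2)}
    (h : p.support = q.support) : p = q := by
  ext t
  have h2 := Finset.ext_iff.mp h t
  simp only [MvPolynomial.mem_support_iff] at h2
  exact zmod2_eq_of_ne_iff h2

/-- Over `ZMod 2`, the support of a sum is the symmetric difference of supports. -/
lemma support_add_symmDiff {n : ℕ} (p q : MvPolynomial (Fin n) (ZMod 2)) :
    (p + q).support = symmDiff p.support q.support := by
  have h : ∀ a b : ZMod 2, a + b ≠ 0 ↔ (a ≠ 0 ∧ ¬b ≠ 0) ∨ (b ≠ 0 ∧ ¬a ≠ 0) := by decide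
  ext t
  simp only [MvPolynomial.mem_support_iff, coeff_add, Finset.mem_symmDiff]
  exact h _ _

/-- Squarefree (multilinear) reduction of an exponent vector. -/
noncomputable def mlred {n : ℕ} (m : Fin n →₀ ℕ) : Fin n →₀ ℕ :=
  ∑ i ∈ m.support, Finsupp.single i 1

lemma mlred_apply {n : ℕ} (m : Fin n →₀ ℕ) (j : Fin n) :
    mlred m j = if j ∈ m.support then 1 else 0 := by
  rw [mlred, Finsupp.finset_sum_apply]
  by_cases hj : j ∈ m.support
  · rw [if_pos hj, Finset.sum_eq_single j]
    · simp
    · intro i _ hij; simp [Finsupp.single_apply, hij]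
    · exact fun h => absurd hj h
  · rw [if_neg hj, Finset.sum_eq_zero]
    intro i hi
    have : i ≠ j := fun h => hj (h ▸ hi)
    simp [Finsupp.single_apply, this]

lemma mlred_le {n : ℕ} (m : Fin n →₀ ℕ) : mlred m ≤ m := by
  intro j
  rw [mlred_apply]
  split_ifs with h
  · exact Nat.one_le_iff_ne_zero.mpr (Finsupp.mem_support_iff.mp h)
  · exact Nat.zero_le _

lemma mlred_boolean {n : ℕ} (m : Fin n →₀ ℕ) (j : Fin n) : mlred m j ≤ 1 := by
  rw [mlred_apply]; split_ifs <;> simp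

lemma mlred_eq_self {n : ℕ} {m : Fin n →₀ ℕ} (h : ∀ i, m i ≤ 1) : mlred m = m := by
  ext j
  rw [mlred_apply]
  rcases Finset.decidableMem j m.support with hj | hj
  · simp [Finsupp.notMem_support_iff.mp hj, if_neg hj]
  · have := Finsupp.mem_support_iff.mp hj
    have := h j
    simp only [if_pos hj]; omega

lemma mlred_support {n : ℕ} (m : Fin n →₀ ℕ) : (mlred m).support = m.support := by
  ext j
  simp only [Finsupp.mem_support_iff, mlred_apply]
  by_cases h : j ∈ m.support
  · simp [if_pos h, Finsupp.mem_support_iff.mp h]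
  · simp [if_neg h, Finsupp.notMem_support_iff.mp h]

lemma eval_monomial_mlred {n : ℕ} (p : Fin n → ZMod 2) (m : Fin n →₀ ℕ) (c : ZMod 2) :
    eval p (monomial (mlred m) c) = eval p (monomial m c) := by
  rw [eval_monomial, eval_monomial]
  congr 1
  rw [Finsupp.prod, Finsupp.prod, mlred_support]
  apply Finset.prod_congr rfl
  intro i hi
  rw [mlred_apply, if_pos hi, zmod2_pow _ (Finsupp.mem_support_iff.mp hi), pow_one]

/-- Multilinearization of a polynomial. -/
noncomputable def mlin {n : ℕ} (f : MvPolynomial (Fin n) (ZMod 2)) :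
    MvPolynomial (Fin n) (ZMod 2) :=
  ∑ m ∈ f.support, monomial (mlred m) (coeff m f)

lemma eval_mlin {n : ℕ} (p : Fin n → ZMod 2) (f : MvPolynomial (Fin n) (ZMod 2)) :
    eval p (mlin f) = eval p f := by
  conv_rhs => rw [← support_sum_monomial_coeff f]
  rw [mlin, map_sum, map_sum]
  exact Finset.sum_congr rfl fun m _ => eval_monomial_mlred p m _

lemma mlin_support {n : ℕ} (f : MvPolynomial (Fin n) (ZMod 2)) :
    ∀ t ∈ (mlin f).support, ∃ m ∈ f.support, mlred m = t := by
  intro t ht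
  by_contra hc
  push_neg at hc
  apply MvPolynomial.mem_support_iff.mp ht
  rw [mlin, MvPolynomial.coeff_sum]
  apply Finset.sum_eq_zero
  intro m hm
  rw [coeff_monomial, if_neg (hc m hm)]

lemma mlin_coeff {n : ℕ} (f : MvPolynomial (Fin n) (ZMod 2)) (t : Fin n →₀ ℕ) :
    coeff t (mlin f) = ∑ m ∈ f.support, if mlred m = t then coeff m f else 0 := by
  rw [mlin, MvPolynomial.coeff_sum]
  exact Finset.sum_congr rfl fun m _ => coeff_monomial t (mlred m) _

lemma mem_pointsVanishingIdeal {n : ℕ} {P : Set (Fin n → ZMod 2)}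
    {f : MvPolynomial (Fin n) (ZMod 2)} :
    f ∈ pointsVanishingIdeal P ↔ ∀ p ∈ P, eval p f = 0 := Iff.rfl

lemma eval_monomial_one_fintype {n : ℕ} (p : Fin n → ZMod 2) (t : Fin n →₀ ℕ) :
    eval p (monomial t (1 : ZMod 2)) = ∏ j, p j ^ t j := by
  rw [eval_monomial, one_mul]
  exact Finsupp.prod_fintype _ _ fun j => pow_zero (p j)

/-- Monomials with an exponent ≥ 2 are not standard for the vanishing ideal. -/
lemma std_is_boolean {n : ℕ} (P : Set (Fin n → ZMod 2)) (t : Fin n →₀ ℕ)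
    (h : IsStdMonomial MonomialOrder.lex (pointsVanishingIdeal P) t) : ∀ i, t i ≤ 1 := by
  intro i
  by_contra hi
  push_neg at hi
  apply h
  set t' : Fin n →₀ ℕ := t - Finsupp.single i 1 with ht'
  have ht'i : t' i = t i - 1 := by rw [ht', Finsupp.tsub_apply, Finsupp.single_apply, if_pos rfl]
  have ht'j : ∀ j, j ≠ i → t' j = t j := by
    intro j hj
    rw [ht', Finsupp.tsub_apply, Finsupp.single_apply, if_neg (Ne.symm hj), Nat.sub_zero]
  have htne : t' ≠ t := by
    intro he
    have h2 : t' i = t i := by rw [he]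
    rw [ht'i] at h2
    omega
  refine ⟨monomial t 1 + monomial t' 1, ?_, ?_, ?_⟩
  · rw [mem_pointsVanishingIdeal]
    intro p _
    rw [map_add, eval_monomial_one_fintype, eval_monomial_one_fintype]
    have : ∏ j, p j ^ t j = ∏ j, p j ^ t' j := by
      apply Finset.prod_congr rfl
      intro j _
      by_cases hji : j = i
      · subst hji
        rw [ht'i, zmod2_pow _ (by omega), zmod2_pow _ (by omega)]
      · rw [ht'j j hji]
    rw [this, zmod2_add_self]
  · rw [MvPolynomial.mem_support_iff, coeff_add, coeff_monomial, coeff_monomial,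
      if_pos rfl, if_neg htne]
    simp
  · intro s hs
    have hsub := MvPolynomial.support_add hs
    rw [Finset.mem_union] at hsub
    have hs' : s = t ∨ s = t' := by
      rcases hsub with h1 | h1
      · left
        rw [MvPolynomial.support_monomial, if_neg one_ne_zero, Finset.mem_singleton] at h1
        exact h1
      · right
        rw [MvPolynomial.support_monomial, if_neg one_ne_zero, Finset.mem_singleton] at h1
        exact h1
    rcases hs' with rfl | rfl
    · exact le_refl _
    · show MonomialOrder.lex.toSyn t' ≤ MonomialOrder.lex.toSyn t
      rw [MonomialOrder.lex_le_iff]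
      apply Finsupp.toLex_monotone
      exact tsub_le_self

/-- The support of an ext-lex-minimal Boolean polynomial for its values on `P`
consists of standard monomials of the vanishing ideal of `P`. -/
lemma supp_min_std {n : ℕ} (P : Set (Fin n → ZMod 2)) (g : MvPolynomial (Fin n) (ZMod 2))
    (hbool : IsBooleanPoly g)
    (hmin : ∀ q, IsBooleanPoly q → (∀ p ∈ P, eval p q = eval p g) → ExtLexLe g q) :
    ∀ t ∈ g.support, IsStdMonomial MonomialOrder.lex (pointsVanishingIdeal P) t := by
  intro t ht
  rintro ⟨f, hfI, htLM⟩
  have html : ∀ i, t i ≤ 1 := hbool t ht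
  set G := mlin f with hG
  have hGsupp_le : ∀ m' ∈ G.support, toLex m' ≤ toLex t := by
    intro m' hm'
    obtain ⟨m, hm, rfl⟩ := mlin_support f m' hm'
    refine le_trans (Finsupp.toLex_monotone (mlred_le m)) ?_
    have h2 := htLM.2 m hm
    rwa [MonomialOrder.lex_le_iff] at h2
  have hcoefft : coeff t G = coeff t f := by
    rw [hG, mlin_coeff, Finset.sum_eq_single t]
    · rw [if_pos (mlred_eq_self html)]
    · intro m hm hmne
      rw [if_neg]
      intro he
      have h1 : toLex t ≤ toLex m := he ▸ Finsupp.toLex_monotone (mlred_le m)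
      have h2 : toLex m ≤ toLex t := htLM.2 m hm
      exact hmne (toLex.injective (le_antisymm h2 h1))
    · intro h; exact absurd htLM.1 h
  have htG : t ∈ G.support := by
    rw [MvPolynomial.mem_support_iff, hcoefft]
    exact MvPolynomial.mem_support_iff.mp htLM.1
  have hGbool : IsBooleanPoly G := by
    intro m hm i
    obtain ⟨m', _, rfl⟩ := mlin_support f m hm
    exact mlred_boolean m' i
  have hGvanish : ∀ p ∈ P, eval p G = 0 := fun p hp => (eval_mlin p f).trans (hfI p hp)
  set q := g + G with hq
  have hsq : q.support = symmDiff g.support G.support := support_add_symmDiff g G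
  have hqbool : IsBooleanPoly q := by
    intro m hm i
    rcases Finset.mem_union.mp (MvPolynomial.support_add hm) with h | h
    · exact hbool m h i
    · exact hGbool m h i
  have hqvals : ∀ p ∈ P, eval p q = eval p g := by
    intro p hp
    rw [hq, map_add, hGvanish p hp, add_zero]
  have htq : t ∉ q.support := by
    rw [hsq, Finset.mem_symmDiff]
    push_neg
    exact ⟨fun _ => htG, fun _ => ht⟩
  rcases hmin q hqbool hqvals with he | hlt
  · have hG0 : G = 0 := by
      have h2 := he
      rw [hq, left_eq_add] at h2
      exact h2
    rw [hG0] at htG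
    simp at htG
  · obtain ⟨m, hmmem, hmax⟩ := hlt
    have hsymm : symmDiff g.support q.support = G.support := by
      rw [hsq, symmDiff_symmDiff_cancel_left]
    have hmG : m ∈ G.support := by
      rw [← hsymm, Finset.mem_symmDiff]
      right
      exact ⟨(Finset.mem_sdiff.mp hmmem).1, (Finset.mem_sdiff.mp hmmem).2⟩
    have h1 : toLex m ≤ toLex t := hGsupp_le m hmG
    have h2 : toLex t ≤ toLex m := hmax t (by rw [hsymm]; exact htG)
    have h3 : m = t := toLex.injective (le_antisymm h1 h2)
    rw [h3] at hmmem
    exact htq (Finset.mem_sdiff.mp hmmem).1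

/-- The number of `k`-tuples of subsets of `P` whose minimal interpolation polynomials
jointly cover all standard monomials of the vanishing ideal of `P` (w.r.t. lex)
is `(2 ^ k - 1) ^ |P|`. -/
theorem card_covering_tuples (n k : ℕ) (P : Finset (Fin n → ZMod 2))
    (NF : Finset (Fin n → ZMod 2) → MvPolynomial (Fin n) (ZMod 2))
    (hNF : ∀ Z ⊆ P, IsBooleanPoly (NF Z) ∧
      (∀ z ∈ Z, eval z (NF Z) = 0) ∧ (∀ o ∈ P \ Z, eval o (NF Z) = 1) ∧
      ∀ q : MvPolynomial (Fin n) (ZMod 2), IsBooleanPoly q →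
        (∀ z ∈ Z, eval z q = 0) → (∀ o ∈ P \ Z, eval o q = 1) → ExtLexLe (NF Z) q) :
    {T : Fin k → Finset (Fin n → ZMod 2) | (∀ j, T j ⊆ P) ∧
        ∀ t : Fin n →₀ ℕ,
          IsStdMonomial MonomialOrder.lex (pointsVanishingIdeal (↑P : Set (Fin n → ZMod 2))) t →
            ∃ j, t ∈ (NF (T j)).support}.ncard
      = (2 ^ k - 1) ^ P.card := by
  classical
  -- the finset of standard monomials
  set SM : Finset (Fin n →₀ ℕ) :=
    ((Finset.univ : Finset (Finset (Fin n))).image fun s => ∑ i ∈ s, Finsupp.single i 1).filter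
      (fun t => IsStdMonomial MonomialOrder.lex (pointsVanishingIdeal (↑P)) t) with hSMdef
  have hSM_mem : ∀ t : Fin n →₀ ℕ,
      t ∈ SM ↔ IsStdMonomial MonomialOrder.lex (pointsVanishingIdeal (↑P)) t := by
    intro t
    constructor
    · intro ht
      exact (Finset.mem_filter.mp ht).2
    · intro ht
      rw [hSMdef, Finset.mem_filter]
      refine ⟨Finset.mem_image.mpr ⟨t.support, Finset.mem_univ _, ?_⟩, ht⟩
      exact mlred_eq_self (std_is_boolean _ t ht)
  -- support of NF lands in SM
  have hNFsupp : ∀ Z ⊆ P, (NF Z).support ⊆ SM := by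
    intro Z hZ t ht
    obtain ⟨hb, h0, h1, hm⟩ := hNF Z hZ
    rw [hSM_mem]
    refine supp_min_std (↑P) (NF Z) hb ?_ t ht
    intro q hqb hqv
    apply hm q hqb
    · intro z hz
      rw [hqv z (hZ hz), h0 z hz]
    · intro o ho
      rw [hqv o (Finset.mem_sdiff.mp ho).1, h1 o ho]
  -- NF is injective on subsets of P
  have hNFinj : ∀ Z ⊆ P, ∀ Z' ⊆ P, NF Z = NF Z' → Z = Z' := by
    have key : ∀ Z ⊆ P, ∀ Z' ⊆ P, NF Z = NF Z' → Z ⊆ Z' := by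
      intro Z hZ Z' hZ' he x hx
      by_contra hx'
      have h1 : eval x (NF Z) = 0 := (hNF Z hZ).2.1 x hx
      have h2 : eval x (NF Z') = 1 :=
        (hNF Z' hZ').2.2.1 x (Finset.mem_sdiff.mpr ⟨hZ hx, hx'⟩)
      rw [he, h2] at h1
      exact one_ne_zero h1
    intro Z hZ Z' hZ' he
    exact le_antisymm (key Z hZ Z' hZ' he) (key Z' hZ' Z hZ he.symm)
  -- |SM| ≤ |P| by linear independence of evaluation vectors
  have hcard1 : SM.card ≤ P.card := by
    set v : ↥SM → (↥P → ZMod 2) :=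
      fun t p => eval (p : Fin n → ZMod 2) (monomial (t : Fin n →₀ ℕ) 1) with hv
    have hli : LinearIndependent (ZMod 2) v := by
      rw [Fintype.linearIndependent_iff]
      intro g hg
      by_contra hc
      push_neg at hc
      obtain ⟨t₀, hg0⟩ := hc
      set F : MvPolynomial (Fin n) (ZMod 2) :=
        ∑ t : ↥SM, monomial (t : Fin n →₀ ℕ) (g t) with hF
      have hcoeff : ∀ s : Fin n →₀ ℕ,
          coeff s F = ∑ t : ↥SM, if (t : Fin n →₀ ℕ) = s then g t else 0 := by
        intro s
        rw [hF, MvPolynomial.coeff_sum]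
        exact Finset.sum_congr rfl fun t _ => coeff_monomial s _ _
      have hcoefft₀ : coeff (t₀ : Fin n →₀ ℕ) F = g t₀ := by
        rw [hcoeff, Finset.sum_eq_single t₀]
        · rw [if_pos rfl]
        · intro t _ htne
          rw [if_neg (fun he => htne (Subtype.ext he))]
        · intro h; exact absurd (Finset.mem_univ t₀) h
      have hFsupp : F.support ⊆ SM := by
        intro s hs
        by_contra hsSM
        apply MvPolynomial.mem_support_iff.mp hs
        rw [hcoeff]
        apply Finset.sum_eq_zero
        intro t _
        rw [if_neg]
        intro he
        exact hsSM (he ▸ t.2)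
      have hFI : F ∈ pointsVanishingIdeal (↑P : Set (Fin n → ZMod 2)) := by
        rw [mem_pointsVanishingIdeal]
        intro p hp
        have h2 := congrFun hg (⟨p, hp⟩ : ↥P)
        rw [Finset.sum_apply] at h2
        rw [hF, map_sum]
        rw [show (0 : ZMod 2) = (0 : ↥P → ZMod 2) ⟨p, hp⟩ from rfl, ← h2]
        apply Finset.sum_congr rfl
        intro t _
        simp [hv, eval_monomial]
      have hne : F.support.Nonempty :=
        ⟨_, MvPolynomial.mem_support_iff.mpr (hcoefft₀ ▸ hg0)⟩
      obtain ⟨tm, htm, hmax⟩ :=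
        Finset.exists_max_image F.support (fun s => MonomialOrder.lex.toSyn s) hne
      have htmSM := hFsupp htm
      rw [hSM_mem] at htmSM
      exact htmSM ⟨F, hFI, htm, hmax⟩
    have h2 := hli.fintype_card_le_finrank
    rwa [Module.finrank_fintype_fun_eq_card, Fintype.card_coe, Fintype.card_coe] at h2
  -- |P| ≤ |SM| via injectivity of Z ↦ support (NF Z)
  have hmaps : ∀ Z ∈ P.powerset, (NF Z).support ∈ SM.powerset := by
    intro Z hZ
    exact Finset.mem_powerset.mpr (hNFsupp Z (Finset.mem_powerset.mp hZ))
  have hinjOn : Set.InjOn (fun Z => (NF Z).support) ↑P.powerset := by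
    intro Z hZ Z' hZ' he
    exact hNFinj Z (Finset.mem_powerset.mp hZ) Z' (Finset.mem_powerset.mp hZ')
      (eq_of_support_eq he)
  have hcard2 : P.card ≤ SM.card := by
    have h2 := Finset.card_le_card_of_injOn _ hmaps hinjOn
    rw [Finset.card_powerset, Finset.card_powerset] at h2
    exact (pow_le_pow_iff_right₀ (by norm_num : (1:ℕ) < 2)).mp h2
  have hcard : SM.card = P.card := le_antisymm hcard1 hcard2
  -- the image of the powerset of P is the full powerset of SM
  have himage : P.powerset.image (fun Z => (NF Z).support) = SM.powerset := by
    apply Finset.eq_of_subset_of_card_le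
    · intro S hS
      obtain ⟨Z, hZ, rfl⟩ := Finset.mem_image.mp hS
      exact hmaps Z hZ
    · rw [Finset.card_powerset, Finset.card_image_of_injOn hinjOn, Finset.card_powerset, hcard]
  -- rewrite the covering condition via SM
  have hset : {T : Fin k → Finset (Fin n → ZMod 2) | (∀ j, T j ⊆ P) ∧
        ∀ t : Fin n →₀ ℕ,
          IsStdMonomial MonomialOrder.lex (pointsVanishingIdeal (↑P : Set (Fin n → ZMod 2))) t →
            ∃ j, t ∈ (NF (T j)).support}
      = {T : Fin k → Finset (Fin n → ZMod 2) | (∀ j, T j ⊆ P) ∧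
          ∀ t ∈ SM, ∃ j, t ∈ (NF (T j)).support} := by
    ext T
    simp only [Set.mem_setOf_eq]
    constructor
    · rintro ⟨h1, h2⟩
      exact ⟨h1, fun t ht => h2 t ((hSM_mem t).mp ht)⟩
    · rintro ⟨h1, h2⟩
      exact ⟨h1, fun t ht => h2 t ((hSM_mem t).mpr ht)⟩
  rw [hset]
  -- set up the bijection with SM-indexed nonzero bit vectors
  set A := {T : Fin k → Finset (Fin n → ZMod 2) | (∀ j, T j ⊆ P) ∧
      ∀ t ∈ SM, ∃ j, t ∈ (NF (T j)).support} with hA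
  set W := (↥SM → {w : Fin k → Bool // w ≠ fun _ => false}) with hW
  have hψ : ∀ T ∈ A, ∀ t : ↥SM,
      (fun j => decide ((t : Fin n →₀ ℕ) ∈ (NF (T j)).support)) ≠ fun _ => false := by
    intro T hT t hfun
    obtain ⟨j, hj⟩ := hT.2 (t : Fin n →₀ ℕ) t.2
    have h2 := congrFun hfun j
    rw [decide_eq_false_iff_not] at h2
    exact h2 hj
  set ψ : ↥A → W := fun T t =>
    ⟨fun j => decide ((t : Fin n →₀ ℕ) ∈ (NF (T.1 j)).support), hψ T.1 T.2 t⟩ with hψdef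
  have hbij : Function.Bijective ψ := by
    constructor
    · intro T T' h
      apply Subtype.ext
      funext j
      have hsupp : (NF (T.1 j)).support = (NF (T'.1 j)).support := by
        ext s
        constructor
        · intro hs
          have hsSM : s ∈ SM := hNFsupp _ (T.2.1 j) hs
          have h2 := congrFun (congrArg Subtype.val (congrFun h ⟨s, hsSM⟩)) j
          rw [decide_eq_decide] at h2
          exact h2.mp hs
        · intro hs
          have hsSM : s ∈ SM := hNFsupp _ (T'.2.1 j) hs
          have h2 := congrFun (congrArg Subtype.val (congrFun h ⟨s, hsSM⟩)) j
          rw [decide_eq_decide] at h2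
          exact h2.mpr hs
      exact hNFinj _ (T.2.1 j) _ (T'.2.1 j) (eq_of_support_eq hsupp)
    · intro w
      have hchoice : ∀ j : Fin k, ∃ Z, Z ⊆ P ∧ (NF Z).support
          = SM.filter (fun s => ∃ h : s ∈ SM, (w ⟨s, h⟩).1 j = true) := by
        intro j
        have hSj : SM.filter (fun s => ∃ h : s ∈ SM, (w ⟨s, h⟩).1 j = true) ∈ SM.powerset :=
          Finset.mem_powerset.mpr (Finset.filter_subset _ _)
        rw [← himage] at hSj
        obtain ⟨Z, hZ, hZe⟩ := Finset.mem_image.mp hSj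
        exact ⟨Z, Finset.mem_powerset.mp hZ, hZe⟩
      choose Zf hZf1 hZf2 using hchoice
      have hZA : Zf ∈ A := by
        refine ⟨hZf1, ?_⟩
        intro t ht
        have hne := (w ⟨t, ht⟩).2
        rw [Function.ne_iff] at hne
        obtain ⟨j, hj⟩ := hne
        rw [Bool.ne_false_iff] at hj
        refine ⟨j, ?_⟩
        rw [hZf2 j, Finset.mem_filter]
        exact ⟨ht, ht, hj⟩
      refine ⟨⟨Zf, hZA⟩, ?_⟩
      funext t
      apply Subtype.ext
      funext j
      show decide ((t : Fin n →₀ ℕ) ∈ (NF (Zf j)).support) = (w t).1 j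
      rw [hZf2 j]
      have hmem : (↑t ∈ SM.filter (fun s => ∃ h : s ∈ SM, (w ⟨s, h⟩).1 j = true))
          ↔ (w t).1 j = true := by
        rw [Finset.mem_filter]
        constructor
        · rintro ⟨hs, h, hb⟩
          rwa [Subtype.coe_eta] at hb
        · intro hb
          exact ⟨t.2, t.2, by rwa [Subtype.coe_eta]⟩
      rw [decide_eq_decide.mpr hmem, Bool.decide_coe]
  have hAcard : A.ncard = Nat.card W := by
    rw [← Nat.card_coe_set_eq]
    exact Nat.card_eq_of_bijective ψ hbij
  rw [hAcard, hW, Nat.card_fun]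
  have h1 : Nat.card {w : Fin k → Bool // w ≠ fun _ => false} = 2 ^ k - 1 := by
    rw [Nat.card_eq_fintype_card]
    have := Fintype.card_subtype_compl (fun w : Fin k → Bool => w = fun _ => false)
    rw [Fintype.card_subtype_eq] at this
    simp only [ne_eq]
    rw [this]
    congr 1
    simp [Fintype.card_fun]
  have h2 : Nat.card ↥SM = P.card := by
    rw [Nat.card_eq_fintype_card, Fintype.card_coe, hcard]
  rw [h1, h2]
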